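/- arXiv:1404.0720 — 2 statements merged into one kernel-verified Lean document; each statement's English description precedes it below -/
import Mathlib

section
/- Let Ω ⊆ ℝ² be open and let u, v : Ω → ℝ be twice continuously differentiable. Set H = diag(1,−1) and E = E₁₂ (the 2×2 matrix with 1 in position (1,2) and 0 elsewhere). Then the 𝔪-valued harmonic map equation Δu·H + Δv·E + Σᵢ₌₁² β(∂ᵢu·H + ∂ᵢv·E, ∂ᵢu·H + ∂ᵢv·E) = 0 holds on Ω if and only if Δu = 0 and Δv = 0 on Ω, i.e., if and only if the two coordinate functions are harmonic. -/
/-!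
Every matrix `a • H + b • E` is traceless, and a traceless `2 × 2` matrix `X` satisfies
`X * X = -det X • 1` (Cayley–Hamilton, via `adj X = -X`), so `β(X, X) = X² - ½ tr(X²) • 1`
vanishes. The harmonic map equation therefore reduces to `Δu • H + Δv • E = 0`, and `H`, `E`
are linearly independent.
-/

open Matrix

/-- Partial derivative of `f : (Fin m → ℝ) → ℝ` in the `i`-th coordinate
direction. -/
noncomputable def pderiv2 {m : ℕ} (i : Fin m) (f : (Fin m → ℝ) → ℝ)
    (x : Fin m → ℝ) : ℝ :=
  fderiv ℝ f x (Pi.single i 1)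

/-- Euclidean Laplacian of `f : (Fin m → ℝ) → ℝ`. -/
noncomputable def laplacian2 {m : ℕ} (f : (Fin m → ℝ) → ℝ) (x : Fin m → ℝ) : ℝ :=
  ∑ i : Fin m, pderiv2 i (pderiv2 i f) x

/-- The Fisher α-connection function
`β(X,Y) = (XY + YX)/2 − (tr(XY)/2)·I` on real 2×2 matrices. -/
noncomputable def fisherBeta2 (X Y : Matrix (Fin 2) (Fin 2) ℝ) :
    Matrix (Fin 2) (Fin 2) ℝ :=
  (2⁻¹ : ℝ) • (X * Y + Y * X) - ((X * Y).trace / 2) • (1 : Matrix (Fin 2) (Fin 2) ℝ)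

theorem adjugate_eq_neg_of_trace_eq_zero {R : Type*} [CommRing R]
    {X : Matrix (Fin 2) (Fin 2) R} (hX : X.trace = 0) : adjugate X = -X := by
  have hX11 : X 1 1 = -X 0 0 := by
    rw [trace_fin_two] at hX
    exact eq_neg_of_add_eq_zero_right hX
  rw [adjugate_fin_two, eta_fin_two (-X)]
  simp [hX11]

theorem mul_self_eq_neg_det_smul_one_of_trace_eq_zero {R : Type*} [CommRing R]
    {X : Matrix (Fin 2) (Fin 2) R} (hX : X.trace = 0) :
    X * X = -X.det • (1 : Matrix (Fin 2) (Fin 2) R) := by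
  rw [neg_smul, ← adjugate_mul, adjugate_eq_neg_of_trace_eq_zero hX, neg_mul, neg_neg]

theorem fisherBeta2_self_eq_zero_of_trace_eq_zero {X : Matrix (Fin 2) (Fin 2) ℝ}
    (hX : X.trace = 0) : fisherBeta2 X X = 0 := by
  simp only [fisherBeta2, mul_self_eq_neg_det_smul_one_of_trace_eq_zero hX, trace_smul, trace_one,
    Fintype.card_fin]
  module

section Sl2Basis

variable {R : Type*} [Ring R]

theorem trace_smul_add_smul_sl2Basis (a b : R) :
    (a • !![(1 : R), 0; 0, -1] + b • !![0, 1; 0, 0]).trace = 0 := by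
  simp [trace_fin_two]

theorem smul_add_smul_sl2Basis_eq_zero_iff {a b : R} :
    a • !![(1 : R), 0; 0, -1] + b • !![0, 1; 0, 0] = 0 ↔ a = 0 ∧ b = 0 := by
  refine ⟨fun h => ⟨by simpa using congr_fun₂ h 0 0, by simpa using congr_fun₂ h 0 1⟩, ?_⟩
  rintro ⟨rfl, rfl⟩
  simp

end Sl2Basis

theorem sl2_harmonic_iff_coords_harmonic_general
    (Ω : Set (Fin 2 → ℝ))
    (u v : (Fin 2 → ℝ) → ℝ)
    (H E : Matrix (Fin 2) (Fin 2) ℝ)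
    (hH : H = !![1, 0; 0, -1]) (hE : E = !![0, 1; 0, 0]) :
    (∀ x ∈ Ω,
        laplacian2 u x • H + laplacian2 v x • E +
          ∑ i : Fin 2,
            fisherBeta2 (pderiv2 i u x • H + pderiv2 i v x • E)
              (pderiv2 i u x • H + pderiv2 i v x • E) = 0) ↔
      (∀ x ∈ Ω, laplacian2 u x = 0 ∧ laplacian2 v x = 0) := by
  subst hH hE
  simp only [fisherBeta2_self_eq_zero_of_trace_eq_zero (trace_smul_add_smul_sl2Basis _ _),
    Finset.sum_const_zero, add_zero, smul_add_smul_sl2Basis_eq_zero_iff]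

/-- Let `Ω ⊆ ℝ²` be open and `u, v : Ω → ℝ` be C². With `H = diag(1,−1)` and
`E = E₁₂`, the 𝔪-valued harmonic map equation
`Δu·H + Δv·E + Σᵢ β(∂ᵢu·H + ∂ᵢv·E, ∂ᵢu·H + ∂ᵢv·E) = 0` holds on `Ω` iff
`Δu = 0` and `Δv = 0` on `Ω`, i.e. iff both coordinate functions are
harmonic. -/
theorem sl2_harmonic_iff_coords_harmonic
    (Ω : Set (Fin 2 → ℝ)) (hΩ : IsOpen Ω)
    (u v : (Fin 2 → ℝ) → ℝ)
    (hu : ContDiffOn ℝ 2 u Ω) (hv : ContDiffOn ℝ 2 v Ω)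
    (H E : Matrix (Fin 2) (Fin 2) ℝ)
    (hH : H = !![1, 0; 0, -1]) (hE : E = !![0, 1; 0, 0]) :
    (∀ x ∈ Ω,
        laplacian2 u x • H + laplacian2 v x • E +
          ∑ i : Fin 2,
            fisherBeta2 (pderiv2 i u x • H + pderiv2 i v x • E)
              (pderiv2 i u x • H + pderiv2 i v x • E) = 0) ↔
      (∀ x ∈ Ω, laplacian2 u x = 0 ∧ laplacian2 v x = 0) :=
  sl2_harmonic_iff_coords_harmonic_general Ω u v H E hH hE
end

section
/- Let N be a strictly upper triangular real n×n matrix (so Nⁿ = 0), and define the matrix-valued polynomial curve B(t) = Σ_{m=1}^{n−1} ((−1)^{m−1}/m)·tᵐ·Nᵐ. Then B(0) = 0, B′(0) = N, and B satisfies the geodesic system B″(t) + (B′(t))² = 0 for all t ∈ ℝ; entrywise, the functions b_{ij}(t) = B(t)_{ij} satisfy b_{ij}″(t) + Σ_{i<k<j} b_{ik}′(t)·b_{kj}′(t) = 0 for all 1 ≤ i < j ≤ n. -/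
/-!
`B(t)` is the degree `n - 1` truncation of `log (1 + tN)`, so its derivative
`D(t) = Σ_{k < n-1} (-t)ᵏ Nᵏ⁺¹` is the truncated geometric series for `N (1 + tN)⁻¹`; since
`Nⁿ = 0` the truncation is invisible and `(1 + tN) D(t) = N` holds exactly. Differentiating this
identity gives `N D + (1 + tN) D' = 0`, hence `(1 + tN) (D' + D²) = -N D + N D = 0`, and
`1 + tN` is a unit because `tN` is nilpotent. So `B'' + B'² = 0`; entrywise, the sum over
`i < k < j` is all of `(B'²)ᵢⱼ` because `B'` is strictly upper triangular.
-/

open Matrix Finset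

section Algebraic

variable {A : Type*} [Ring A] [Algebra ℝ A]

noncomputable def logCurve (n : ℕ) (N : A) (t : ℝ) : A :=
  ∑ m ∈ Icc 1 (n - 1), ((-1 : ℝ) ^ (m - 1) / (m : ℝ) * t ^ m) • N ^ m

noncomputable def logCurveDeriv (n : ℕ) (N : A) (t : ℝ) : A :=
  ∑ k ∈ range (n - 1), (-t) ^ k • N ^ (k + 1)

theorem logCurve_zero (n : ℕ) (N : A) : logCurve n N 0 = 0 :=
  sum_eq_zero fun m hm => by rw [zero_pow (by grind), mul_zero, zero_smul]

variable {n : ℕ} {N : A}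

theorem one_add_smul_mul_logCurveDeriv (hN : N ^ n = 0) (t : ℝ) :
    (1 + t • N) * logCurveDeriv n N t = N := by
  have hgeom : logCurveDeriv n N t = (∑ k ∈ range (n - 1), (-t • N) ^ k) * N := by
    simp only [logCurveDeriv, sum_mul, smul_pow, smul_mul_assoc, pow_succ]
  rw [hgeom, ← mul_assoc, ← sub_neg_eq_add, ← neg_smul, mul_neg_geom_sum, sub_mul, one_mul,
    smul_pow, smul_mul_assoc, ← pow_succ, pow_eq_zero_of_le (by omega) hN, smul_zero, sub_zero]

theorem logCurveDeriv_zero (hN : N ^ n = 0) : logCurveDeriv n N 0 = N := by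
  simpa using one_add_smul_mul_logCurveDeriv hN 0

end Algebraic

section Analytic

variable {A : Type*} [NormedRing A] [NormedAlgebra ℝ A] {n : ℕ} {N : A}

theorem hasDerivAt_logCurve (n : ℕ) (N : A) (t : ℝ) :
    HasDerivAt (logCurve n N) (logCurveDeriv n N t) t := by
  have hreindex : logCurve n N = fun s =>
      ∑ k ∈ range (n - 1), ((-1 : ℝ) ^ k / (k + 1 : ℕ) * s ^ (k + 1)) • N ^ (k + 1) := by
    funext s
    have hIcc : Icc 1 (n - 1) = Ico 1 n := by ext; simp only [mem_Icc, mem_Ico]; omega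
    rw [logCurve, hIcc, sum_Ico_eq_sum_range]
    refine sum_congr rfl fun k _ => ?_
    rw [add_comm 1 k, Nat.add_sub_cancel]
  rw [hreindex, logCurveDeriv]
  refine HasDerivAt.fun_sum fun k _ => ?_
  convert ((hasDerivAt_pow (k + 1) t).const_mul ((-1 : ℝ) ^ k / (k + 1 : ℕ))).smul_const
    (N ^ (k + 1)) using 2
  rw [neg_pow, Nat.add_sub_cancel]
  field_simp

theorem differentiable_logCurveDeriv (n : ℕ) (N : A) : Differentiable ℝ (logCurveDeriv n N) := by
  unfold logCurveDeriv
  fun_prop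

theorem deriv_logCurveDeriv (hN : N ^ n = 0) (t : ℝ) :
    deriv (logCurveDeriv n N) t = -logCurveDeriv n N t ^ 2 := by
  have hdiff : N * logCurveDeriv n N t + (1 + t • N) * deriv (logCurveDeriv n N) t = 0 := by
    have hprod := (((hasDerivAt_id t).smul_const N).const_add 1).fun_mul
      (differentiable_logCurveDeriv n N t).hasDerivAt
    simp only [id, one_smul, one_add_smul_mul_logCurveDeriv hN] at hprod
    exact hprod.unique (hasDerivAt_const t N)
  have hunit : IsUnit (1 + t • N) := (IsNilpotent.smul ⟨n, hN⟩ t).isUnit_one_add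
  rw [← add_eq_zero_iff_eq_neg, ← hunit.mul_right_eq_zero, mul_add, pow_two, ← mul_assoc,
    one_add_smul_mul_logCurveDeriv hN, add_comm, hdiff]

end Analytic

namespace Matrix

theorem pow_apply_eq_zero_of_lt_add {n : ℕ} {R : Type*} [Semiring R]
    {N : Matrix (Fin n) (Fin n) R} (hN : ∀ i j, j ≤ i → N i j = 0) (m : ℕ) {i j : Fin n}
    (hij : (j : ℕ) < i + m) : (N ^ m) i j = 0 := by
  induction m generalizing j with
  | zero => exact one_apply_ne (by rintro rfl; omega)
  | succ m ih =>
    rw [pow_succ, mul_apply]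
    refine sum_eq_zero fun k _ => ?_
    by_cases hk : (k : ℕ) < i + m
    · rw [ih hk, zero_mul]
    · rw [hN k j (by rw [Fin.le_def]; omega), mul_zero]

theorem mul_apply_eq_sum_Ioo {ι R : Type*} [Fintype ι] [LinearOrder ι] [LocallyFiniteOrder ι]
    [NonUnitalNonAssocSemiring R] {M M' : Matrix ι ι R} (hM : ∀ i j, j ≤ i → M i j = 0)
    (hM' : ∀ i j, j ≤ i → M' i j = 0) (i j : ι) :
    (M * M') i j = ∑ k ∈ Ioo i j, M i k * M' k j := by
  rw [mul_apply]
  refine (sum_subset (subset_univ _) fun k _ hk => ?_).symm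
  rcases le_or_gt k i with hki | hik
  · rw [hM i k hki, zero_mul]
  · rw [hM' k j (not_lt.1 fun hkj => hk (mem_Ioo.2 ⟨hik, hkj⟩)), mul_zero]

end Matrix

theorem logCurveDeriv_apply_eq_zero_of_le {d : ℕ} {N : Matrix (Fin d) (Fin d) ℝ}
    (hN : ∀ i j, j ≤ i → N i j = 0) (n : ℕ) (t : ℝ) (i j : Fin d) (hij : j ≤ i) :
    logCurveDeriv n N t i j = 0 := by
  rw [logCurveDeriv, Matrix.sum_apply]
  refine sum_eq_zero fun k _ => ?_
  rw [Matrix.smul_apply, pow_apply_eq_zero_of_lt_add hN _ (by omega), smul_zero]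

section MatrixCalculus

-- Any normed-algebra structure would do: entries are continuous linear in every norm.
attribute [local instance] Matrix.linftyOpNormedRing Matrix.linftyOpNormedAlgebra

variable {ι : Type*} [Fintype ι] [DecidableEq ι]

theorem HasDerivAt.matrix_apply {𝕜 : Type*} [NontriviallyNormedField 𝕜] [CompleteSpace 𝕜]
    {f : 𝕜 → Matrix ι ι 𝕜} {f' : Matrix ι ι 𝕜} {t : 𝕜} (h : HasDerivAt f f' t) (i j : ι) :
    HasDerivAt (fun s => f s i j) (f' i j) t :=
  (entryLinearMap 𝕜 𝕜 i j).toContinuousLinearMap.hasFDerivAt.comp_hasDerivAt t h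

theorem deriv_logCurve_apply (n : ℕ) (N : Matrix ι ι ℝ) (i j : ι) :
    deriv (fun s => logCurve n N s i j) = fun t => logCurveDeriv n N t i j :=
  funext fun t => ((hasDerivAt_logCurve n N t).matrix_apply i j).deriv

theorem deriv_deriv_logCurve_apply {n : ℕ} {N : Matrix ι ι ℝ} (hN : N ^ n = 0) (t : ℝ)
    (i j : ι) : deriv (deriv fun s => logCurve n N s i j) t = -(logCurveDeriv n N t ^ 2) i j := by
  have h := ((differentiable_logCurveDeriv n N t).hasDerivAt.matrix_apply i j).deriv
  rw [deriv_logCurveDeriv hN] at h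
  rw [deriv_logCurve_apply]
  exact h

end MatrixCalculus

/-- Let `N` be strictly upper triangular (so `Nⁿ = 0`) and let
`B(t) = Σ_{m=1}^{n−1} ((−1)^{m−1}/m)·tᵐ·Nᵐ`. Then `B(0) = 0`, `B′(0) = N`,
and `B` satisfies the geodesic system `B″(t) + (B′(t))² = 0`; entrywise,
`b_{ij}″(t) + Σ_{i<k<j} b_{ik}′(t)·b_{kj}′(t) = 0` for all `i < j`. -/
theorem nilpotent_log_curve_geodesic (n : ℕ)
    (N : Matrix (Fin n) (Fin n) ℝ)
    (hN : ∀ i j : Fin n, j ≤ i → N i j = 0)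
    (B : ℝ → Matrix (Fin n) (Fin n) ℝ)
    (hB : B = fun t => ∑ m ∈ Finset.Icc 1 (n - 1),
      ((-1 : ℝ) ^ (m - 1) / (m : ℝ) * t ^ m) • N ^ m) :
    N ^ n = 0 ∧
    B 0 = 0 ∧
    (∀ i j : Fin n, deriv (fun t => B t i j) 0 = N i j) ∧
    (∀ t : ℝ,
      (Matrix.of fun i j : Fin n => deriv (deriv fun s => B s i j) t) +
        (Matrix.of fun i j : Fin n => deriv (fun s => B s i j) t) ^ 2 = 0) ∧
    (∀ t : ℝ, ∀ i j : Fin n, i < j →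
      deriv (deriv fun s => B s i j) t +
        ∑ k ∈ Finset.Ioo i j,
          deriv (fun s => B s i k) t * deriv (fun s => B s k j) t = 0) := by
  replace hB : B = logCurve n N := hB
  subst hB
  have hNn : N ^ n = 0 := by
    ext i j
    exact pow_apply_eq_zero_of_lt_add hN n (by omega)
  have hD (t : ℝ) :
      (of fun i j => deriv (fun s => logCurve n N s i j) t) = logCurveDeriv n N t := by
    ext i j
    simp [deriv_logCurve_apply]
  have hD' (t : ℝ) :
      (of fun i j => deriv (deriv fun s => logCurve n N s i j) t) = -logCurveDeriv n N t ^ 2 := by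
    ext i j
    simp [deriv_deriv_logCurve_apply hNn]
  refine ⟨hNn, logCurve_zero n N, fun i j => ?_, fun t => by rw [hD, hD', neg_add_cancel],
    fun t i j _ => ?_⟩
  · simp only [deriv_logCurve_apply, logCurveDeriv_zero hNn]
  · have hupper := logCurveDeriv_apply_eq_zero_of_le hN n t
    rw [deriv_deriv_logCurve_apply hNn]
    simp only [deriv_logCurve_apply]
    rw [← mul_apply_eq_sum_Ioo hupper hupper, ← pow_two, neg_add_cancel]
end
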